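/- Let L ⊂ M_{n,ℓ,t} be a t-spread lex set and N ⊂ M_{n,ℓ,t} a t-spread strongly stable set with |L| ≤ |N|. Then m_{≤ i}(L) ≤ m_{≤ i}(N) for all i = 1,...,n. -/

import Mathlib

open Multiset Finset

/-- A monomial in `K[x_1,…,x_n]` is encoded by the multiset of its variable
indices (each index lies in `[1, n]`).  `TSpread n d t u` says that `u` is a
t-spread monomial: its degree is at most `d`, its indices lie in `[1,n]`, and
consecutive indices `j_k ≤ j_{k+1}` of its sorted index list satisfy
`j_{k+1} - j_k ≥ t_k` (here `t 1 = t_1, …, t (d-1) = t_{d-1}`). -/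
def TSpread (n d : ℕ) (t : ℕ → ℕ) (u : Multiset ℕ) : Prop :=
  u.card ≤ d ∧ (∀ i ∈ u, 1 ≤ i ∧ i ≤ n) ∧
    ∀ k : ℕ, k + 1 < u.card →
      (u.sort (· ≤ ·)).getD k 0 + t (k + 1) ≤ (u.sort (· ≤ ·)).getD (k + 1) 0

/-- `Mset n d ℓ t` : the set `M_{n,ℓ,t}` of t-spread monomials of degree `ℓ`. -/
def Mset (n d ℓ : ℕ) (t : ℕ → ℕ) : Set (Multiset ℕ) :=
  {u | TSpread n d t u ∧ u.card = ℓ}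

/-- the t-spread shadow `Shad_t(L) = {x_i w : w ∈ L, x_i w t-spread, i = 1..n}`. -/
def Shad (n d : ℕ) (t : ℕ → ℕ) (L : Set (Multiset ℕ)) : Set (Multiset ℕ) :=
  {v | ∃ w ∈ L, ∃ i, 1 ≤ i ∧ i ≤ n ∧ v = i ::ₘ w ∧ TSpread n d t v}

/-- largest variable index dividing `u` (0 for the constant monomial). -/
def maxVar (u : Multiset ℕ) : ℕ := (u.sort (· ≤ ·)).getLastD 0

/-- `lexGE u v` : `u ≥_lex v` for monomials of equal degree, where the
lexicographic order is induced by `x_1 > x_2 > ⋯ > x_n`. -/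
def lexGE (u v : Multiset ℕ) : Prop :=
  u = v ∨ List.Lex (· < ·) (u.sort (· ≤ ·)) (v.sort (· ≤ ·))

/-- `L` is a t-spread strongly stable set. -/
def StronglyStableSet (n d : ℕ) (t : ℕ → ℕ) (L : Set (Multiset ℕ)) : Prop :=
  ∀ u ∈ L, ∀ i ∈ u, ∀ j : ℕ, 1 ≤ j → j < i →
    TSpread n d t (j ::ₘ u.erase i) → (j ::ₘ u.erase i) ∈ L

/-- `L` is a t-spread lex set (inside `M_{n,ℓ,t}`). -/
def LexSet (n d ℓ : ℕ) (t : ℕ → ℕ) (L : Set (Multiset ℕ)) : Prop :=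
  ∀ u ∈ L, ∀ v ∈ Mset n d ℓ t, lexGE v u → v ∈ L

/-- `m_i(L)` : number of monomials of `L` with largest variable index `i`. -/
noncomputable def mEq (i : ℕ) (L : Set (Multiset ℕ)) : ℕ :=
  {u ∈ L | maxVar u = i}.ncard

/-- `m_{≤ i}(L)` : number of monomials of `L` with largest variable index `≤ i`. -/
noncomputable def mLe (i : ℕ) (L : Set (Multiset ℕ)) : ℕ :=
  {u ∈ L | maxVar u ≤ i}.ncard

/-- `I` is (the set of monomials of) a monomial ideal of `K[x_1,…,x_n]`. -/
def MonIdeal (n : ℕ) (I : Set (Multiset ℕ)) : Prop :=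
  (∀ u ∈ I, ∀ i ∈ u, 1 ≤ i ∧ i ≤ n) ∧
    ∀ u ∈ I, ∀ i : ℕ, 1 ≤ i → i ≤ n → (i ::ₘ u) ∈ I

/-- `I` is generated by t-spread monomials. -/
def TSpreadGen (n d : ℕ) (t : ℕ → ℕ) (I : Set (Multiset ℕ)) : Prop :=
  ∀ u ∈ I, ∃ v ∈ I, TSpread n d t v ∧ v ≤ u

/-- The t-spread operator `a ↦ a^{(n,ℓ,t)}`:  if `a = Σ_{j=p}^{ℓ} C(a_j, j)` is
the Macaulay expansion of `a` with respect to `ℓ`, then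
`tOp t_ℓ ℓ a = Σ_{j=p+1}^{ℓ+1} C(a_{j-1} + 1 - t_ℓ, j)`, computed greedily. -/
noncomputable def tOp (s : ℕ) : ℕ → ℕ → ℕ
  | 0, _ => 0
  | ℓ + 1, a =>
    if a = 0 then 0
    else
      (sSup {b | Nat.choose b (ℓ + 1) ≤ a} + 1 - s).choose (ℓ + 2) +
        tOp s ℓ (a - Nat.choose (sSup {b | Nat.choose b (ℓ + 1) ≤ a}) (ℓ + 1))

/-- The graded Betti number `β_{i,j}(I)` of a t-spread strongly stable ideal,
via the Eliahou–Kervaire-type formula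
`β_{i,i+q}(I) = Σ_{u ∈ G(I)_q} C(max(u) - 1 - Σ_{h=1}^{q-1} t_h, i)`. -/
noncomputable def betti (t : ℕ → ℕ) (I : Set (Multiset ℕ)) (i j : ℕ) : ℕ :=
  ∑ᶠ u ∈ {u ∈ I | u.card = j - i ∧ ∀ v ∈ I, v ≤ u → v = u},
    (maxVar u - 1 - ∑ h ∈ Finset.Icc 1 (j - i - 1), t h).choose i

/-!
Induct on the degree `ℓ` and, inside, on `n`. The monomials with `maxVar ≤ n` of a lex (strongly
stable) subset of `M_{n+1,ℓ,t}` form a lex (strongly stable) subset of `M_{n,ℓ,t}`, so it suffices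
to show `m_{≤ n}(L) ≤ m_{≤ n}(N)` inside `M_{n+1,ℓ+1,t}`.

Write a monomial as `u = w · x_j` with `j = max u`. If `w x_{n+1} ∈ N`, strong stability puts the
whole column `w x_j`, `max w + t_ℓ ≤ j ≤ n`, into `N`. The prefixes `w` of the members of `L` form
a lex set with at most one element more than there are members of `L` divisible by `x_{n+1}`.
Hence if `m_{≤ n}(L) > m_{≤ n}(N)`, the prefixes of `L` are at most as many as the `w` with
`w x_{n+1} ∈ N`; induction on `ℓ` compares their `m_{≤ i}`, and summing column sizes
(`∑_w |column w| = ∑_i m_{≤ i}`) gives `m_{≤ n}(L) ≤ m_{≤ n}(N)`, a contradiction.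
-/

theorem List.Lex.append_of_length_eq {α : Type*} {r : α → α → Prop} {a b : List α}
    (h : List.Lex r a b) (hlen : a.length = b.length) (c d : List α) :
    List.Lex r (a ++ c) (b ++ d) := by
  induction h with
  | nil => simp at hlen
  | rel h => exact .rel h
  | cons _ ih => exact .cons (ih (by simpa using hlen))

theorem Multiset.sort_cons_of_forall_le {α : Type*} [LinearOrder α] {w : Multiset α} {j : α}
    (h : ∀ x ∈ w, x ≤ j) :
    (j ::ₘ w).sort (· ≤ ·) = w.sort (· ≤ ·) ++ [j] := by
  refine List.Perm.eq_of_pairwise' (r := (· ≤ ·)) (pairwise_sort _ _) ?_ ?_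
  · exact List.pairwise_append.mpr ⟨pairwise_sort _ _, List.pairwise_singleton _ _,
      fun x hx y hy => (List.mem_singleton.mp hy) ▸ h x ((mem_sort _).mp hx)⟩
  · rw [← Multiset.coe_eq_coe, sort_eq, ← Multiset.coe_add, sort_eq, Multiset.coe_singleton,
      add_comm, Multiset.singleton_add]

theorem Multiset.sort_le_injective {α : Type*} [LinearOrder α] :
    Function.Injective (fun u : Multiset α => u.sort (· ≤ ·)) :=
  fun u v h => by
    rw [← Multiset.sort_eq u (· ≤ ·), ← Multiset.sort_eq v (· ≤ ·)]
    exact congrArg _ h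

section
variable {n m d ℓ i j : ℕ} {t : ℕ → ℕ} {u w : Multiset ℕ} {L N : Finset (Multiset ℕ)}

theorem maxVar_cons_of_forall_le (h : ∀ x ∈ w, x ≤ j) :
    maxVar (j ::ₘ w) = j := by
  rw [maxVar, Multiset.sort_cons_of_forall_le h, List.getLastD_concat]

theorem maxVar_singleton (a : ℕ) : maxVar {a} = a :=
  maxVar_cons_of_forall_le (by simp)

theorem maxVar_eq_of_mem_of_forall_le (hj : j ∈ u)
    (h : ∀ x ∈ u, x ≤ j) : maxVar u = j := by
  rw [← Multiset.cons_erase hj]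
  exact maxVar_cons_of_forall_le fun x hx => h x (Multiset.mem_of_mem_erase hx)

theorem isGreatest_maxVar (hu : u ≠ 0) : IsGreatest {x | x ∈ u} (maxVar u) := by
  obtain ⟨j, hj, hmax⟩ := u.toFinset.exists_max_image id (by simpa using hu)
  simp only [Multiset.mem_toFinset, id] at hj hmax
  rw [maxVar_eq_of_mem_of_forall_le hj hmax]
  exact ⟨hj, hmax⟩

theorem maxVar_mem (hu : u ≠ 0) : maxVar u ∈ u :=
  (isGreatest_maxVar hu).1

theorem le_maxVar {x : ℕ} (hx : x ∈ u) : x ≤ maxVar u :=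
  (isGreatest_maxVar (by rintro rfl; simp at hx)).2 hx

theorem getD_sort_card_sub_one_eq_maxVar (u : Multiset ℕ) :
    (u.sort (· ≤ ·)).getD (card u - 1) 0 = maxVar u := by
  rw [maxVar, List.getLastD_eq_getLast?, List.getLast?_eq_getElem?, List.getD_eq_getElem?_getD,
    Multiset.length_sort]

theorem tSpread_cons_iff (hw : w ≠ 0) (hj : ∀ x ∈ w, x ≤ j) :
    TSpread n d t (j ::ₘ w) ↔ card w + 1 ≤ d ∧ TSpread (n - t (card w)) d t w ∧
      maxVar w + t (card w) ≤ j ∧ j ≤ n := by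
  obtain ⟨m, hm⟩ : ∃ m, card w = m + 1 := Nat.exists_eq_succ_of_ne_zero (by simpa using hw)
  have hlen : (w.sort (· ≤ ·)).length = m + 1 := by rw [Multiset.length_sort, hm]
  have hlast := getD_sort_card_sub_one_eq_maxVar w
  have hget : ∀ k < m + 1, ((w.sort (· ≤ ·)) ++ [j]).getD k 0 = (w.sort (· ≤ ·)).getD k 0 :=
    fun k hk => List.getD_append _ _ _ _ (by omega)
  have hgetj : ((w.sort (· ≤ ·)) ++ [j]).getD (m + 1) 0 = j := by
    rw [List.getD_append_right _ _ _ _ (by omega), hlen]; simp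
  simp only [TSpread, Multiset.sort_cons_of_forall_le hj, Multiset.card_cons, hm,
    Multiset.mem_cons, Nat.add_lt_add_iff_right, Nat.forall_lt_succ_right, forall_eq_or_imp,
    Nat.add_sub_cancel] at hlast ⊢
  rw [hget m (by omega), hgetj, hlast]
  constructor
  · rintro ⟨hd, ⟨⟨-, hjn⟩, hn⟩, hgaps, hgap⟩
    refine ⟨hd, ⟨by omega, fun i hi => ⟨(hn i hi).1, ?_⟩, fun k hk => ?_⟩, hgap, hjn⟩
    · have := le_maxVar hi
      omega
    · rw [← hget k (by omega), ← hget (k + 1) (by omega)]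
      exact hgaps k hk
  · rintro ⟨hd, ⟨-, hn, hgaps⟩, hgap, hjn⟩
    refine ⟨hd, ⟨⟨?_, hjn⟩, fun i hi => ⟨(hn i hi).1, by have := (hn i hi).2; omega⟩⟩,
      fun k hk => ?_, hgap⟩
    · obtain ⟨x, hx⟩ := Multiset.exists_mem_of_ne_zero hw
      have := (hn x hx).1
      have := hj x hx
      omega
    · rw [hget k (by omega), hget (k + 1) (by omega)]
      exact hgaps k hk
def eraseMax (u : Multiset ℕ) : Multiset ℕ := u.erase (maxVar u)

theorem eraseMax_cons_of_forall_le (h : ∀ x ∈ w, x ≤ j) :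
    eraseMax (j ::ₘ w) = w := by
  rw [eraseMax, maxVar_cons_of_forall_le h, Multiset.erase_cons_head]

theorem maxVar_cons_eraseMax (hu : u ≠ 0) : maxVar u ::ₘ eraseMax u = u :=
  Multiset.cons_erase (maxVar_mem hu)

theorem le_maxVar_of_mem_eraseMax {x : ℕ} (hx : x ∈ eraseMax u) :
    x ≤ maxVar u :=
  le_maxVar (Multiset.mem_of_mem_erase hx)

theorem sort_eq_sort_eraseMax_append (hu : u ≠ 0) :
    u.sort (· ≤ ·) = (eraseMax u).sort (· ≤ ·) ++ [maxVar u] := by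
  conv_lhs => rw [← maxVar_cons_eraseMax hu]
  exact Multiset.sort_cons_of_forall_le fun _ => le_maxVar_of_mem_eraseMax

theorem TSpread.maxVar_le (h : TSpread n d t u) : maxVar u ≤ n := by
  rcases eq_or_ne u 0 with rfl | hu
  · simp [maxVar]
  · exact (h.2.1 _ (maxVar_mem hu)).2

theorem TSpread.mono (h : TSpread n d t u) (hnm : n ≤ m) : TSpread m d t u :=
  ⟨h.1, fun i hi => ⟨(h.2.1 i hi).1, (h.2.1 i hi).2.trans hnm⟩, h.2.2⟩

theorem TSpread.of_maxVar_le (h : TSpread m d t u) (hu : maxVar u ≤ n) : TSpread n d t u :=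
  ⟨h.1, fun i hi => ⟨(h.2.1 i hi).1, (le_maxVar hi).trans hu⟩, h.2.2⟩

theorem ne_zero_of_mem_Mset (hℓ : ℓ ≠ 0) (hu : u ∈ Mset n d ℓ t) : u ≠ 0 := by
  rintro rfl
  exact hℓ hu.2.symm

theorem maxVar_add_le_of_mem_Mset (hℓ : ℓ ≠ 0) (hw : w ∈ Mset (n - m) d ℓ t) :
    maxVar w + m ≤ n := by
  have := hw.1.2.1 _ (maxVar_mem (ne_zero_of_mem_Mset hℓ hw))
  omega

theorem eraseMax_mem_Mset (hℓ : ℓ ≠ 0) (hu : u ∈ Mset n d (ℓ + 1) t) :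
    eraseMax u ∈ Mset (n - t ℓ) d ℓ t ∧ maxVar (eraseMax u) + t ℓ ≤ maxVar u := by
  have hu0 := ne_zero_of_mem_Mset (Nat.succ_ne_zero ℓ) hu
  have hcard : card (eraseMax u) = ℓ := by
    rw [eraseMax, Multiset.card_erase_of_mem (maxVar_mem hu0), hu.2]
    rfl
  have hts := hu.1
  rw [← maxVar_cons_eraseMax hu0,
    tSpread_cons_iff (by rintro h; simp [h] at hcard; omega) fun _ => le_maxVar_of_mem_eraseMax,
    hcard] at hts
  exact ⟨⟨hts.2.1, hcard⟩, hts.2.2.1⟩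

theorem cons_mem_Mset (hℓ : ℓ ≠ 0) (hd : ℓ + 1 ≤ d) (hw : w ∈ Mset (n - t ℓ) d ℓ t)
    (hwj : maxVar w + t ℓ ≤ j) (hjn : j ≤ n) : j ::ₘ w ∈ Mset n d (ℓ + 1) t := by
  refine ⟨(tSpread_cons_iff (ne_zero_of_mem_Mset hℓ hw)
    fun x hx => (le_maxVar hx).trans (by omega)).mpr ?_, by rw [Multiset.card_cons, hw.2]⟩
  rw [hw.2]
  exact ⟨hd, hw.1, hwj, hjn⟩

theorem singleton_mem_Mset_one {a : ℕ} (hd : 1 ≤ d) (ha : 1 ≤ a) (han : a ≤ n) :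
    {a} ∈ Mset n d 1 t :=
  ⟨⟨by simpa using hd, by simpa using ⟨ha, han⟩, by simp⟩, by simp⟩

theorem finite_Mset (n d ℓ : ℕ) (t : ℕ → ℕ) : (Mset n d ℓ t).Finite := by
  refine (((Finset.range (n + 1)).sym ℓ).finite_toSet.image (↑)).subset fun u hu => ?_
  exact ⟨⟨u, hu.2⟩, Finset.mem_sym_iff.mpr fun a ha =>
    Finset.mem_range.mpr (Nat.lt_succ_of_le (hu.1.2.1 a ha).2), rfl⟩

theorem LexSet.sep_maxVar_le {S : Set (Multiset ℕ)} (hlex : LexSet m d ℓ t S) (hnm : n ≤ m) :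
    LexSet n d ℓ t {u ∈ S | maxVar u ≤ n} :=
  fun u hu v hv hvu => ⟨hlex u hu.1 v ⟨hv.1.mono hnm, hv.2⟩ hvu, hv.1.maxVar_le⟩

theorem StronglyStableSet.sep_maxVar_le {S : Set (Multiset ℕ)}
    (hss : StronglyStableSet m d t S) (hnm : n ≤ m) :
    StronglyStableSet n d t {u ∈ S | maxVar u ≤ n} :=
  fun u hu i hi j hj hji hv => ⟨hss u hu.1 i hi j hj hji (hv.mono hnm), hv.maxVar_le⟩

theorem sep_maxVar_le_subset_Mset {S : Set (Multiset ℕ)} (hS : S ⊆ Mset m d ℓ t) :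
    {u ∈ S | maxVar u ≤ n} ⊆ Mset n d ℓ t :=
  fun _ hu => ⟨(hS hu.1).1.of_maxVar_le hu.2, (hS hu.1).2⟩

def column (t : ℕ → ℕ) (ℓ n : ℕ) (w : Multiset ℕ) : Finset (Multiset ℕ) :=
  (Finset.Icc (maxVar w + t ℓ) n).image (· ::ₘ w)

def topPart (n : ℕ) (N : Finset (Multiset ℕ)) : Finset (Multiset ℕ) :=
  (N.filter (maxVar · = n)).image eraseMax

theorem eraseMax_of_mem_column {v : Multiset ℕ} (hv : v ∈ column t ℓ n w) : eraseMax v = w := by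
  obtain ⟨j, hj, rfl⟩ := Finset.mem_image.mp hv
  exact eraseMax_cons_of_forall_le fun x hx =>
    (le_maxVar hx).trans (le_trans (Nat.le_add_right _ _) (Finset.mem_Icc.mp hj).1)

theorem card_biUnion_column (W : Finset (Multiset ℕ)) :
    (W.biUnion (column t ℓ n)).card =
      ∑ i ∈ Finset.range (n + 1 - t ℓ), (W.filter (maxVar · ≤ i)).card := by
  have hdisj : (W : Set (Multiset ℕ)).PairwiseDisjoint (column t ℓ n) :=
    fun w _ w' _ hne => Finset.disjoint_left.mpr fun v hv hv' =>
      hne ((eraseMax_of_mem_column hv).symm.trans (eraseMax_of_mem_column hv'))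
  have hcol : ∀ w, (column t ℓ n w).card = n + 1 - (maxVar w + t ℓ) := fun w => by
    rw [column, Finset.card_image_of_injective _ fun a b h => (Multiset.cons_inj_left w).mp h,
      Nat.card_Icc]
  have hcount : ∀ w, ((Finset.range (n + 1 - t ℓ)).filter (maxVar w ≤ ·)).card =
      n + 1 - (maxVar w + t ℓ) := fun w => by
    rw [Finset.range_eq_Ico, Finset.Ico_filter_le, Nat.card_Ico]
    omega
  simp only [Finset.card_biUnion hdisj, hcol, ← hcount, Finset.card_filter]
  exact Finset.sum_comm

theorem card_filter_maxVar_le_add_card_filter_maxVar_eq (h : ∀ u ∈ L, maxVar u ≤ n + 1) :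
    (L.filter (maxVar · ≤ n)).card + (L.filter (maxVar · = n + 1)).card = L.card := by
  rw [← Finset.card_filter_add_card_filter_not (s := L) (fun u => maxVar u ≤ n)]
  congr 2
  exact Finset.filter_congr fun u hu => by have := h u hu; omega

theorem cons_mem_of_mem_topPart (hw : w ∈ topPart (n + 1) N) : (n + 1) ::ₘ w ∈ N := by
  obtain ⟨u, hu, rfl⟩ := Finset.mem_image.mp hw
  obtain ⟨huN, hun⟩ := Finset.mem_filter.mp hu
  have hu0 : u ≠ 0 := by rintro rfl; simp [maxVar] at hun
  rwa [← hun, maxVar_cons_eraseMax hu0]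

theorem mem_topPart_of_cons_mem (hw : ∀ x ∈ w, x ≤ n + 1) (h : (n + 1) ::ₘ w ∈ N) :
    w ∈ topPart (n + 1) N :=
  Finset.mem_image.mpr ⟨_, Finset.mem_filter.mpr ⟨h, maxVar_cons_of_forall_le hw⟩,
    eraseMax_cons_of_forall_le hw⟩

theorem card_topPart : (topPart (n + 1) N).card = (N.filter (maxVar · = n + 1)).card := by
  refine Finset.card_image_of_injOn fun u hu v hv huv => ?_
  have hne : ∀ u ∈ N.filter (maxVar · = n + 1), u ≠ 0 := fun u hu h => by
    simp [h, maxVar] at hu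
  rw [← maxVar_cons_eraseMax (hne u hu), ← maxVar_cons_eraseMax (hne v hv), huv,
    (Finset.mem_filter.mp hu).2, (Finset.mem_filter.mp hv).2]

theorem image_eraseMax_subset_Mset (hℓ : ℓ ≠ 0) (hL : ↑L ⊆ Mset n d (ℓ + 1) t) :
    ↑(L.image eraseMax) ⊆ Mset (n - t ℓ) d ℓ t := by
  intro _ hw
  obtain ⟨u, hu, rfl⟩ := Finset.mem_image.mp hw
  exact (eraseMax_mem_Mset hℓ (hL hu)).1

theorem topPart_subset_Mset (hℓ : ℓ ≠ 0) (hN : ↑N ⊆ Mset n d (ℓ + 1) t) :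
    ↑(topPart n N) ⊆ Mset (n - t ℓ) d ℓ t :=
  image_eraseMax_subset_Mset hℓ fun _ hu => hN (Finset.mem_filter.mp hu).1

theorem StronglyStableSet.topPart (hℓ : ℓ ≠ 0) (hN : ↑N ⊆ Mset (n + 1) d (ℓ + 1) t)
    (hss : StronglyStableSet (n + 1) d t N) :
    StronglyStableSet (n + 1 - t ℓ) d t ↑(topPart (n + 1) N) := by
  intro w hw i hi j hj hji hts
  have hwN := cons_mem_of_mem_topPart hw
  have hwM := topPart_subset_Mset hℓ hN hw
  have hd : ℓ + 1 ≤ d := by simpa [hwM.2] using (hN hwN).1.1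
  have hw'M : j ::ₘ w.erase i ∈ Mset (n + 1 - t ℓ) d ℓ t :=
    ⟨hts, by
      rw [Multiset.card_cons, Multiset.card_erase_of_mem hi, hwM.2, Nat.pred_eq_sub_one]; omega⟩
  have hcons := cons_mem_Mset hℓ hd hw'M (maxVar_add_le_of_mem_Mset hℓ hw'M) le_rfl
  have hmem := hss _ hwN i (Multiset.mem_cons_of_mem hi) j hj hji
    (by rw [Multiset.erase_cons_tail_of_mem hi, Multiset.cons_swap]; exact hcons.1)
  rw [Multiset.erase_cons_tail_of_mem hi, Multiset.cons_swap] at hmem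
  exact mem_topPart_of_cons_mem (fun x hx => (hw'M.1.2.1 x hx).2.trans (Nat.sub_le _ _)) hmem

theorem biUnion_column_topPart_subset (hℓ : ℓ ≠ 0) (hN : ↑N ⊆ Mset (n + 1) d (ℓ + 1) t)
    (hss : StronglyStableSet (n + 1) d t N) :
    (topPart (n + 1) N).biUnion (column t ℓ n) ⊆ N.filter (maxVar · ≤ n) := by
  intro v hv
  obtain ⟨w, hw, hvw⟩ := Finset.mem_biUnion.mp hv
  obtain ⟨j, hj, rfl⟩ := Finset.mem_image.mp hvw
  obtain ⟨hwj, hjn⟩ := Finset.mem_Icc.mp hj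
  have hwN := cons_mem_of_mem_topPart hw
  have hwM := topPart_subset_Mset hℓ hN hw
  have hd : ℓ + 1 ≤ d := by simpa [hwM.2] using (hN hwN).1.1
  have hjw := cons_mem_Mset hℓ hd hwM hwj (Nat.le_succ_of_le hjn)
  have hj1 := (hjw.1.2.1 j (Multiset.mem_cons_self _ _)).1
  have hmem := hss _ hwN (n + 1) (Multiset.mem_cons_self _ _) j hj1 (by omega)
    (by rw [Multiset.erase_cons_head]; exact hjw.1)
  rw [Multiset.erase_cons_head] at hmem
  refine Finset.mem_filter.mpr ⟨hmem, ?_⟩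
  rw [maxVar_cons_of_forall_le fun x hx => (le_maxVar hx).trans (by omega)]
  exact hjn

theorem filter_maxVar_le_subset_biUnion_column (hℓ : ℓ ≠ 0)
    (hL : ↑L ⊆ Mset (n + 1) d (ℓ + 1) t) :
    L.filter (maxVar · ≤ n) ⊆ (L.image eraseMax).biUnion (column t ℓ n) := by
  intro v hv
  obtain ⟨hvL, hvn⟩ := Finset.mem_filter.mp hv
  refine Finset.mem_biUnion.mpr ⟨_, Finset.mem_image_of_mem _ hvL,
    Finset.mem_image.mpr ⟨maxVar v, Finset.mem_Icc.mpr ⟨?_, hvn⟩, ?_⟩⟩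
  · exact (eraseMax_mem_Mset hℓ (hL hvL)).2
  · exact maxVar_cons_eraseMax (ne_zero_of_mem_Mset (Nat.succ_ne_zero ℓ) (hL hvL))

theorem cons_mem_of_lex_lt_of_mem_image_eraseMax (hℓ : ℓ ≠ 0)
    (hL : ↑L ⊆ Mset (n + 1) d (ℓ + 1) t) (hlex : LexSet (n + 1) d (ℓ + 1) t L)
    {w' : Multiset ℕ} (hw : w ∈ L.image eraseMax) (hw' : w' ∈ Mset (n + 1 - t ℓ) d ℓ t)
    (hlt : List.Lex (· < ·) (w'.sort (· ≤ ·)) (w.sort (· ≤ ·))) :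
    (n + 1) ::ₘ w' ∈ L := by
  obtain ⟨u, huL, rfl⟩ := Finset.mem_image.mp hw
  have huM := hL huL
  have hd : ℓ + 1 ≤ d := huM.2 ▸ huM.1.1
  refine hlex u huL _ (cons_mem_Mset hℓ hd hw' (maxVar_add_le_of_mem_Mset hℓ hw') le_rfl)
    (Or.inr ?_)
  rw [Multiset.sort_cons_of_forall_le fun x hx => (hw'.1.2.1 x hx).2.trans (Nat.sub_le _ _),
    sort_eq_sort_eraseMax_append (ne_zero_of_mem_Mset (Nat.succ_ne_zero ℓ) huM)]
  refine hlt.append_of_length_eq ?_ _ _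
  rw [Multiset.length_sort, Multiset.length_sort, hw'.2, (eraseMax_mem_Mset hℓ huM).1.2]

theorem LexSet.image_eraseMax (hℓ : ℓ ≠ 0) (hL : ↑L ⊆ Mset (n + 1) d (ℓ + 1) t)
    (hlex : LexSet (n + 1) d (ℓ + 1) t L) :
    LexSet (n + 1 - t ℓ) d ℓ t ↑(L.image eraseMax) := by
  rintro w hw w' hw' (rfl | hlt)
  · exact hw
  · have hcons := cons_mem_of_lex_lt_of_mem_image_eraseMax hℓ hL hlex hw hw' hlt
    refine Finset.mem_image.mpr ⟨_, hcons, eraseMax_cons_of_forall_le fun x hx => ?_⟩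
    exact (hw'.1.2.1 x hx).2.trans (Nat.sub_le _ _)

theorem card_image_eraseMax_le (hℓ : ℓ ≠ 0) (hL : ↑L ⊆ Mset (n + 1) d (ℓ + 1) t)
    (hlex : LexSet (n + 1) d (ℓ + 1) t L) :
    (L.image eraseMax).card ≤ (L.filter (maxVar · = n + 1)).card + 1 := by
  have hM := image_eraseMax_subset_Mset hℓ hL
  have hle : ∀ w ∈ L.image eraseMax, ∀ x ∈ w, x ≤ n + 1 :=
    fun w hw x hx => ((hM hw).1.2.1 x hx).2.trans (Nat.sub_le _ _)
  rw [← Finset.card_filter_add_card_filter_not (s := L.image eraseMax)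
    (fun w => (n + 1) ::ₘ w ∈ L)]
  refine add_le_add (Finset.card_le_card_of_injOn ((n + 1) ::ₘ ·) (fun w hw => ?_)
    (fun w _ w' _ h => (Multiset.cons_inj_right _).mp h)) (Finset.card_le_one.mpr ?_)
  · obtain ⟨hwP, hwL⟩ := Finset.mem_filter.mp hw
    exact Finset.mem_filter.mpr ⟨hwL, maxVar_cons_of_forall_le (hle w hwP)⟩
  · -- A prefix `w` with `x_{n+1} w ∉ L` is lex-below every other prefix, so there is only one.
    intro w hw w' hw'
    obtain ⟨hwP, hwL⟩ := Finset.mem_filter.mp hw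
    obtain ⟨hw'P, hw'L⟩ := Finset.mem_filter.mp hw'
    refine Multiset.sort_le_injective (List.le_antisymm (List.not_lt.mp ?_) (List.not_lt.mp ?_))
    · exact fun hlt => hw'L (cons_mem_of_lex_lt_of_mem_image_eraseMax hℓ hL hlex hwP (hM hw'P) hlt)
    · exact fun hlt => hwL (cons_mem_of_lex_lt_of_mem_image_eraseMax hℓ hL hlex hw'P (hM hwP) hlt)

def LexMinimizesMLe (n d ℓ : ℕ) (t : ℕ → ℕ) : Prop :=
  ∀ L N : Finset (Multiset ℕ), ↑L ⊆ Mset n d ℓ t → ↑N ⊆ Mset n d ℓ t →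
    LexSet n d ℓ t L → StronglyStableSet n d t N → L.card ≤ N.card →
    ∀ i, (L.filter (maxVar · ≤ i)).card ≤ (N.filter (maxVar · ≤ i)).card

theorem filter_maxVar_le_eq_self (hL : ↑L ⊆ Mset n d ℓ t) (hi : n ≤ i) :
    L.filter (maxVar · ≤ i) = L :=
  Finset.filter_true_of_mem fun _ hu => (hL hu).1.maxVar_le.trans hi

theorem lexMinimizesMLe_zero : LexMinimizesMLe n d 0 t := by
  intro L N hL hN _ _ hcard i
  refine Finset.card_le_card fun u hu => ?_
  obtain ⟨huL, hui⟩ := Finset.mem_filter.mp hu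
  obtain ⟨v, hv⟩ := Finset.card_pos.mp ((Finset.card_pos.mpr ⟨u, huL⟩).trans_le hcard)
  have huv : u = v := by
    rw [Multiset.card_eq_zero.mp (hL huL).2, Multiset.card_eq_zero.mp (hN hv).2]
  exact Finset.mem_filter.mpr ⟨huv ▸ hv, hui⟩

theorem card_filter_maxVar_le_below_top_of_degree_one (hL : ↑L ⊆ Mset (n + 1) d 1 t)
    (hN : ↑N ⊆ Mset (n + 1) d 1 t) (hss : StronglyStableSet (n + 1) d t N)
    (hcard : L.card ≤ N.card) :
    (L.filter (maxVar · ≤ n)).card ≤ (N.filter (maxVar · ≤ n)).card := by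
  by_cases htop : ∀ u ∈ N, maxVar u ≤ n
  · rw [Finset.filter_true_of_mem htop]
    exact (Finset.card_filter_le _ _).trans hcard
  obtain ⟨u, huN, hun⟩ := not_forall₂.mp htop
  obtain ⟨b, rfl⟩ := Multiset.card_eq_one.mp (hN huN).2
  have hb : b = n + 1 := by
    have := (hN huN).1.maxVar_le
    rw [maxVar_singleton] at this hun
    omega
  subst hb
  refine Finset.card_le_card fun v hv => ?_
  obtain ⟨hvL, hvn⟩ := Finset.mem_filter.mp hv
  obtain ⟨a, rfl⟩ := Multiset.card_eq_one.mp (hL hvL).2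
  rw [maxVar_singleton] at hvn
  have ha := ((hL hvL).1.2.1 a (Multiset.mem_singleton_self a)).1
  have hmem := hss _ huN (n + 1) (Multiset.mem_singleton_self _) a ha (by omega)
    (by simpa using (singleton_mem_Mset_one (hN huN).1.1 ha (Nat.le_succ_of_le hvn)).1)
  rw [Multiset.erase_singleton] at hmem
  exact Finset.mem_filter.mpr ⟨hmem, by rw [maxVar_singleton]; exact hvn⟩

theorem card_filter_maxVar_le_below_top (hℓ : ℓ ≠ 0) (ih : LexMinimizesMLe (n + 1 - t ℓ) d ℓ t)
    (hL : ↑L ⊆ Mset (n + 1) d (ℓ + 1) t) (hN : ↑N ⊆ Mset (n + 1) d (ℓ + 1) t)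
    (hlex : LexSet (n + 1) d (ℓ + 1) t L) (hss : StronglyStableSet (n + 1) d t N)
    (hcard : L.card ≤ N.card) :
    (L.filter (maxVar · ≤ n)).card ≤ (N.filter (maxVar · ≤ n)).card := by
  by_contra! hlt
  have hsplitL := card_filter_maxVar_le_add_card_filter_maxVar_eq (n := n) (L := L)
    fun u hu => (hL hu).1.maxVar_le
  have hsplitN := card_filter_maxVar_le_add_card_filter_maxVar_eq (n := n) (L := N)
    fun u hu => (hN hu).1.maxVar_le
  have hprefix := card_image_eraseMax_le hℓ hL hlex
  have hcol := ih _ _ (image_eraseMax_subset_Mset hℓ hL) (topPart_subset_Mset hℓ hN)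
    (hlex.image_eraseMax hℓ hL) (hss.topPart hℓ hN) (by rw [card_topPart]; omega)
  refine hlt.not_ge ?_
  calc (L.filter (maxVar · ≤ n)).card
      ≤ ((L.image eraseMax).biUnion (column t ℓ n)).card :=
        Finset.card_le_card (filter_maxVar_le_subset_biUnion_column hℓ hL)
    _ = ∑ i ∈ Finset.range (n + 1 - t ℓ), ((L.image eraseMax).filter (maxVar · ≤ i)).card :=
        card_biUnion_column _
    _ ≤ ∑ i ∈ Finset.range (n + 1 - t ℓ), ((topPart (n + 1) N).filter (maxVar · ≤ i)).card :=
        Finset.sum_le_sum fun i _ => hcol i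
    _ = ((topPart (n + 1) N).biUnion (column t ℓ n)).card := (card_biUnion_column _).symm
    _ ≤ (N.filter (maxVar · ≤ n)).card :=
        Finset.card_le_card (biUnion_column_topPart_subset hℓ hN hss)

theorem card_filter_maxVar_le_of_below_top (ih : LexMinimizesMLe n d ℓ t)
    (hL : ↑L ⊆ Mset (n + 1) d ℓ t) (hN : ↑N ⊆ Mset (n + 1) d ℓ t)
    (hlex : LexSet (n + 1) d ℓ t L) (hss : StronglyStableSet (n + 1) d t N)
    (hbelow : (L.filter (maxVar · ≤ n)).card ≤ (N.filter (maxVar · ≤ n)).card)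
    (hi : i ≤ n) :
    (L.filter (maxVar · ≤ i)).card ≤ (N.filter (maxVar · ≤ i)).card := by
  have h := ih (L.filter (maxVar · ≤ n)) (N.filter (maxVar · ≤ n))
    (by rw [Finset.coe_filter]; exact sep_maxVar_le_subset_Mset hL)
    (by rw [Finset.coe_filter]; exact sep_maxVar_le_subset_Mset hN)
    (by rw [Finset.coe_filter]; exact hlex.sep_maxVar_le n.le_succ)
    (by rw [Finset.coe_filter]; exact hss.sep_maxVar_le n.le_succ) hbelow i
  have hfilter : ∀ s : Finset (Multiset ℕ),
      (s.filter (maxVar · ≤ n)).filter (maxVar · ≤ i) = s.filter (maxVar · ≤ i) := fun s => by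
    rw [Finset.filter_filter]
    exact Finset.filter_congr fun _ _ => and_iff_right_of_imp fun h => h.trans hi
  rwa [hfilter, hfilter] at h

end

theorem lexMinimizesMLe (n d ℓ : ℕ) (t : ℕ → ℕ) : LexMinimizesMLe n d ℓ t := by
  induction ℓ generalizing n with
  | zero => exact lexMinimizesMLe_zero
  | succ ℓ ih =>
    induction n with
    | zero =>
      intro L N hL hN _ _ hcard i
      rwa [filter_maxVar_le_eq_self hL i.zero_le, filter_maxVar_le_eq_self hN i.zero_le]
    | succ n ihn =>
      intro L N hL hN hlex hss hcard i
      rcases le_or_gt (n + 1) i with hi | hi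
      · rwa [filter_maxVar_le_eq_self hL hi, filter_maxVar_le_eq_self hN hi]
      refine card_filter_maxVar_le_of_below_top ihn hL hN hlex hss ?_ (Nat.le_of_lt_succ hi)
      rcases ℓ with _ | ℓ
      · exact card_filter_maxVar_le_below_top_of_degree_one hL hN hss hcard
      · exact card_filter_maxVar_le_below_top ℓ.succ_ne_zero (ih _) hL hN hlex hss hcard

theorem mLe_coe (i : ℕ) (L : Finset (Multiset ℕ)) :
    mLe i (L : Set (Multiset ℕ)) = (L.filter (maxVar · ≤ i)).card := by
  rw [mLe, ← Set.ncard_coe_finset, Finset.coe_filter]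
  rfl

theorem stmt6_general (n d ℓ : ℕ) (t : ℕ → ℕ)
    (L N : Set (Multiset ℕ)) (hLM : L ⊆ Mset n d ℓ t) (hNM : N ⊆ Mset n d ℓ t)
    (hlex : LexSet n d ℓ t L) (hss : StronglyStableSet n d t N)
    (hcard : L.ncard ≤ N.ncard) :
    ∀ i, 1 ≤ i → i ≤ n → mLe i L ≤ mLe i N := by
  intro i _ _
  obtain ⟨L, rfl⟩ := ((finite_Mset n d ℓ t).subset hLM).exists_finset_coe
  obtain ⟨N, rfl⟩ := ((finite_Mset n d ℓ t).subset hNM).exists_finset_coe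
  rw [Set.ncard_coe_finset, Set.ncard_coe_finset] at hcard
  rw [mLe_coe, mLe_coe]
  exact lexMinimizesMLe n d ℓ t L N hLM hNM hlex hss hcard i

/-- Bayer-type theorem: if `L ⊆ M_{n,ℓ,t}` is a t-spread lex set and
`N ⊆ M_{n,ℓ,t}` is a t-spread strongly stable set with `|L| ≤ |N|`, then
`m_{≤ i}(L) ≤ m_{≤ i}(N)` for `i = 1,…,n`. -/
theorem stmt6 (n d ℓ : ℕ) (t : ℕ → ℕ) (hd : 2 ≤ d) (hℓ : ℓ ≤ d)
    (L N : Set (Multiset ℕ)) (hLM : L ⊆ Mset n d ℓ t) (hNM : N ⊆ Mset n d ℓ t)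
    (hlex : LexSet n d ℓ t L) (hss : StronglyStableSet n d t N)
    (hcard : L.ncard ≤ N.ncard) :
    ∀ i, 1 ≤ i → i ≤ n → mLe i L ≤ mLe i N :=
  stmt6_general n d ℓ t L N hLM hNM hlex hss hcard
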